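/- Common ancestor decomposition: let G^U ⊂ ℤ^d × (0,∞) × [0,1] be finite with pairwise distinct, strictly positive times, let G be its projection to ℤ^d × (0,∞), fix x ∈ ℤ^d and u ∈ [0,1], and set C := {(y,s) ∈ G : (x,0) <_G (y,s)} with C^U ⊂ G^U the corresponding labelled events. For η ∈ Ω put ξ := Ψ(η, G^U ∖ C^U). Then Ψ(η, G^U) = Ψ(ξ, C^U) and Ψ(Ψ(η,(x,u)), G^U) = Ψ(Ψ(ξ,(x,u)), C^U). -/

import Mathlib

/-- Sites of the lattice `ℤ^d`. -/
abbrev Site (d : ℕ) := Fin d → ℤ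

/-- Spin configurations on `ℤ^d`; `true` encodes spin `+1`, `false` encodes spin `-1`. -/
abbrev Config (d : ℕ) := Site d → Bool

/-- A labelled resampling event `(x, t, u)`: site, time, uniform label. -/
abbrev Event (d : ℕ) := Site d × ℝ × ℝ

/-- ℓ¹ distance on `ℤ^d`. -/
def dist1 {d : ℕ} (x y : Site d) : ℤ := ∑ i, |x i - y i|

/-- Single heat-bath resampling step `Ψ(η,(x,u))`. -/
noncomputable def step {d : ℕ} (cplus : Site d → Config d → ℝ) (η : Config d)
    (x : Site d) (u : ℝ) : Config d :=
  fun y => if y = x then (if u < cplus x η then true else false) else η y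

/-- `Ψ(η, G^U)` for a finite labelled event set, represented by a list of events which is
assumed to be sorted by (pairwise distinct) times: the resampling steps are applied
successively, front of the list (earliest time) first. -/
noncomputable def applyEvents {d : ℕ} (cplus : Site d → Config d → ℝ)
    (η : Config d) : List (Event d) → Config d
  | [] => η
  | e :: rest => applyEvents cplus (step cplus η e.1 e.2.2) rest

/-- The projection `G` of a labelled event set `G^U` onto `ℤ^d × [0,∞)`. -/
def projG {d : ℕ} (l : List (Event d)) : Set (Site d × ℝ) :=
  {p | ∃ u : ℝ, (p.1, p.2, u) ∈ l}

/-- The relation `<_G` on `ℤ^d × [0,∞)`. -/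
def rel {d : ℕ} (G : Set (Site d × ℝ)) (p q : Site d × ℝ) : Prop :=
  (p.1 = q.1 ∧ p.2 < q.2) ∨
  ∃ (K : ℕ) (c : Fin (K + 1) → Site d × ℝ),
    (∀ m, c m ∈ G) ∧
    p.2 < (c 0).2 ∧
    (∀ m : Fin K, (c m.castSucc).2 < (c m.succ).2) ∧
    (c (Fin.last K)).2 ≤ q.2 ∧
    dist1 (c 0).1 p.1 = 1 ∧
    (∀ m : Fin K, dist1 (c m.succ).1 (c m.castSucc).1 = 1) ∧
    (c (Fin.last K)).1 = q.1

/-!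
A heat-bath update at a site reads only the neighbouring spins, so resampling steps at sites
of `ℓ¹` distance at least `2` commute. An event of `G ∖ C` lies at distance at least `2` from
`x` and from every earlier event of `C`, since otherwise it would itself be a descendant of
`(x, 0)`. Hence every event of `G^U ∖ C^U` can be moved before all events of `C^U`, and the
initial update at `x` can be moved past them as well.
-/

theorem List.Sublist.eq_of_forall_mem_iff {α : Type*} {r : α → α → Prop}
    (hr : ∀ a b, r a b → ¬ r b a) {l s t : List α} (hl : l.Pairwise r) (hs : s.Sublist l)
    (ht : t.Sublist l) (h : ∀ a, a ∈ s ↔ a ∈ t) : s = t := by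
  have nodup : ∀ {s : List α}, s.Sublist l → s.Nodup := fun hs =>
    (hl.sublist hs).imp fun hab => by rintro rfl; exact hr _ _ hab hab
  exact ((List.perm_ext_iff_of_nodup (nodup hs) (nodup ht)).2 h).eq_of_pairwise
    (fun a b _ _ hab hba => (hr a b hab hba).elim) (hl.sublist hs) (hl.sublist ht)

lemma dist1_nonneg {d : ℕ} (x y : Site d) : 0 ≤ dist1 x y :=
  Finset.sum_nonneg fun _ _ => abs_nonneg _

lemma dist1_comm {d : ℕ} (x y : Site d) : dist1 x y = dist1 y x :=
  Finset.sum_congr rfl fun _ _ => abs_sub_comm _ _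

lemma dist1_eq_zero {d : ℕ} {x y : Site d} : dist1 x y = 0 ↔ x = y := by
  simp [dist1, Finset.sum_eq_zero_iff_of_nonneg, sub_eq_zero, funext_iff]

lemma eq_or_dist1_eq_one_of_dist1_le_one {d : ℕ} {x y : Site d} (h : dist1 x y ≤ 1) :
    x = y ∨ dist1 x y = 1 := by
  rcases (dist1_nonneg x y).eq_or_lt with h0 | h0
  · exact Or.inl (dist1_eq_zero.1 h0.symm)
  · exact Or.inr (by omega)

section rel

variable {d : ℕ} {G : Set (Site d × ℝ)} {p q r : Site d × ℝ}

lemma rel_of_dist1_eq_one (hq : q ∈ G) (ht : p.2 < q.2) (hd : dist1 q.1 p.1 = 1) :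
    rel G p q :=
  Or.inr ⟨0, fun _ => q, fun _ => hq, ht, finZeroElim, le_rfl, hd, finZeroElim, rfl⟩

lemma rel_of_dist1_le_one (hq : q ∈ G) (ht : p.2 < q.2) (hd : dist1 q.1 p.1 ≤ 1) :
    rel G p q := by
  rcases eq_or_dist1_eq_one_of_dist1_le_one hd with h | h
  · exact Or.inl ⟨h.symm, ht⟩
  · exact rel_of_dist1_eq_one hq ht h

lemma rel_extend (h : rel G p q) (hr : r ∈ G) (ht : q.2 < r.2) (hd : dist1 r.1 q.1 ≤ 1) :
    rel G p r := by
  rcases eq_or_dist1_eq_one_of_dist1_le_one hd with heq | hd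
  · rcases h with ⟨h1, h2⟩ | ⟨K, c, hc, h0, hinc, hlast, hfirst, hsteps, hend⟩
    · exact Or.inl ⟨h1.trans heq.symm, h2.trans ht⟩
    · exact Or.inr ⟨K, c, hc, h0, hinc, hlast.trans ht.le, hfirst, hsteps, hend.trans heq.symm⟩
  rcases h with ⟨h1, h2⟩ | ⟨K, c, hc, h0, hinc, hlast, hfirst, hsteps, hend⟩
  · exact rel_of_dist1_eq_one hr (h2.trans ht) (h1 ▸ hd)
  refine Or.inr ⟨K + 1, Fin.snoc c r, Fin.lastCases ?_ ?_, ?_, Fin.lastCases ?_ ?_, ?_, ?_,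
    Fin.lastCases ?_ ?_, ?_⟩ <;>
    simp [-Fin.castSucc_succ, Fin.succ_castSucc, hlast.trans_lt ht, *]

end rel

def IsNearestNeighbour {d : ℕ} (cplus : Site d → Config d → ℝ) : Prop :=
  ∀ (x : Site d) (η η' : Config d), (∀ y, dist1 y x = 1 → η y = η' y) → cplus x η = cplus x η'

section step

variable {d : ℕ} {cplus : Site d → Config d → ℝ}

lemma IsNearestNeighbour.apply_step (hc : IsNearestNeighbour cplus) {a b : Site d}
    (hab : dist1 a b ≠ 1) (η : Config d) (u : ℝ) : cplus b (step cplus η a u) = cplus b η :=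
  hc b _ _ fun y hy => if_neg (by rintro rfl; exact hab hy)

lemma IsNearestNeighbour.step_comm (hc : IsNearestNeighbour cplus) {a b : Site d}
    (hab : 2 ≤ dist1 a b) (η : Config d) (ua ub : ℝ) :
    step cplus (step cplus η a ua) b ub = step cplus (step cplus η b ub) a ua := by
  have hne : a ≠ b := by rintro rfl; rw [dist1_eq_zero.2 rfl] at hab; omega
  have hba := dist1_comm a b
  funext y
  by_cases hya : y = a <;> by_cases hyb : y = b <;>
    simp [step, hya, hyb, hne, hne.symm, hc.apply_step (a := a) (b := b) (by omega),
      hc.apply_step (a := b) (b := a) (by omega)]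

lemma IsNearestNeighbour.applyEvents_step (hc : IsNearestNeighbour cplus) {x : Site d}
    (u : ℝ) {l : List (Event d)} (hl : ∀ e ∈ l, 2 ≤ dist1 x e.1) (η : Config d) :
    applyEvents cplus (step cplus η x u) l = step cplus (applyEvents cplus η l) x u := by
  induction l generalizing η with
  | nil => rfl
  | cons e l ih =>
    rw [List.forall_mem_cons] at hl
    simp only [applyEvents]
    rw [hc.step_comm hl.1, ih hl.2]

lemma IsNearestNeighbour.applyEvents_eq_filter (hc : IsNearestNeighbour cplus)
    (p : Event d → Prop) [DecidablePred p] {l : List (Event d)}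
    (hl : l.Pairwise (fun a b => a.2.1 < b.2.1))
    (hfar : ∀ a ∈ l, ∀ b ∈ l, p a → ¬ p b → a.2.1 < b.2.1 → 2 ≤ dist1 a.1 b.1)
    (η : Config d) :
    applyEvents cplus η l =
      applyEvents cplus (applyEvents cplus η (l.filter (¬ p ·))) (l.filter (p ·)) := by
  induction l generalizing η with
  | nil => rfl
  | cons e l ih =>
    rw [List.pairwise_cons] at hl
    have ih' := ih hl.2 (fun a ha b hb => hfar a (.tail e ha) b (.tail e hb))
    by_cases he : p e
    · have hfar_e : ∀ b ∈ l.filter (¬ p ·), 2 ≤ dist1 e.1 b.1 := fun b hb => by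
        rw [List.mem_filter, decide_eq_true_iff] at hb
        exact hfar e (.head l) b (.tail e hb.1) he hb.2 (hl.1 b hb.1)
      rw [List.filter_cons_of_neg (by simpa), List.filter_cons_of_pos (by simpa),
        applyEvents, applyEvents, ← hc.applyEvents_step _ hfar_e, ih']
    · rw [List.filter_cons_of_pos (by simpa), List.filter_cons_of_neg (by simpa),
        applyEvents, applyEvents, ih']

end step

theorem stmt4_general {d : ℕ} (cplus : Site d → Config d → ℝ)
    (hNN : ∀ (x : Site d) (η η' : Config d),
      (∀ y, dist1 y x = 1 → η y = η' y) → cplus x η = cplus x η')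
    (l : List (Event d))
    (hsort : l.Pairwise (fun a b => a.2.1 < b.2.1))
    (htime : ∀ e ∈ l, 0 < e.2.1)
    (x : Site d) (u : ℝ)
    (Cu Du : List (Event d)) (hCu : Cu.Sublist l) (hDu : Du.Sublist l)
    (hCmem : ∀ e : Event d, e ∈ Cu ↔ (e ∈ l ∧ rel (projG l) (x, 0) (e.1, e.2.1)))
    (hDmem : ∀ e : Event d, e ∈ Du ↔ (e ∈ l ∧ ¬ rel (projG l) (x, 0) (e.1, e.2.1)))
    (η : Config d) :
    applyEvents cplus η l = applyEvents cplus (applyEvents cplus η Du) Cu ∧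
    applyEvents cplus (step cplus η x u) l =
      applyEvents cplus (step cplus (applyEvents cplus η Du) x u) Cu := by
  classical
  have hc : IsNearestNeighbour cplus := hNN
  set R : Event d → Prop := fun e => rel (projG l) (x, 0) (e.1, e.2.1)
  have hG : ∀ e ∈ l, (e.1, e.2.1) ∈ projG l := fun e he => ⟨e.2.2, he⟩
  have hasymm : ∀ a b : Event d, a.2.1 < b.2.1 → ¬ b.2.1 < a.2.1 := fun _ _ => lt_asymm
  obtain rfl : Cu = l.filter (R ·) :=
    hCu.eq_of_forall_mem_iff hasymm hsort List.filter_sublist (by simp [hCmem, R])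
  obtain rfl : Du = l.filter (¬ R ·) :=
    hDu.eq_of_forall_mem_iff hasymm hsort List.filter_sublist (by simp [hDmem, R])
  have hfar : ∀ a ∈ l, ∀ b ∈ l, R a → ¬ R b → a.2.1 < b.2.1 → 2 ≤ dist1 a.1 b.1 := by
    intro a _ b hb ha hnb hab
    by_contra! h
    exact hnb (rel_extend ha (hG b hb) hab (by dsimp only; rw [dist1_comm]; omega))
  have hxfar : ∀ b ∈ l.filter (¬ R ·), 2 ≤ dist1 x b.1 := by
    intro b hb
    rw [List.mem_filter, decide_eq_true_iff] at hb
    by_contra! h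
    exact hb.2 (rel_of_dist1_le_one (hG b hb.1) (htime b hb.1)
      (by dsimp only; rw [dist1_comm]; omega))
  refine ⟨hc.applyEvents_eq_filter R hsort hfar η, ?_⟩
  rw [← hc.applyEvents_step u hxfar]
  exact hc.applyEvents_eq_filter R hsort hfar _

/-- Common ancestor decomposition: for a finite labelled event set `G^U` with pairwise
distinct strictly positive times (represented as a time-sorted list `l`), a site `x` and a
label `u ∈ [0,1]`, let `C^U` be the set of events `(y,s,u')` of `G^U` with
`(x,0) <_G (y,s)` and let `ξ := Ψ(η, G^U ∖ C^U)`. Then `Ψ(η, G^U) = Ψ(ξ, C^U)` and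
`Ψ(Ψ(η,(x,u)), G^U) = Ψ(Ψ(ξ,(x,u)), C^U)`. -/
theorem stmt4 {d : ℕ} (hd : 1 ≤ d) (cplus : Site d → Config d → ℝ)
    (hrange : ∀ x η, cplus x η ∈ Set.Icc (0 : ℝ) 1)
    (hNN : ∀ (x : Site d) (η η' : Config d),
      (∀ y, dist1 y x = 1 → η y = η' y) → cplus x η = cplus x η')
    (l : List (Event d))
    (hsort : l.Pairwise (fun a b => a.2.1 < b.2.1))
    (htime : ∀ e ∈ l, 0 < e.2.1)
    (hu' : ∀ e ∈ l, e.2.2 ∈ Set.Icc (0 : ℝ) 1)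
    (x : Site d) (u : ℝ) (hu : u ∈ Set.Icc (0 : ℝ) 1)
    (Cu Du : List (Event d)) (hCu : Cu.Sublist l) (hDu : Du.Sublist l)
    (hCmem : ∀ e : Event d, e ∈ Cu ↔ (e ∈ l ∧ rel (projG l) (x, 0) (e.1, e.2.1)))
    (hDmem : ∀ e : Event d, e ∈ Du ↔ (e ∈ l ∧ ¬ rel (projG l) (x, 0) (e.1, e.2.1)))
    (η : Config d) :
    applyEvents cplus η l = applyEvents cplus (applyEvents cplus η Du) Cu ∧
    applyEvents cplus (step cplus η x u) l =
      applyEvents cplus (step cplus (applyEvents cplus η Du) x u) Cu :=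
  stmt4_general cplus hNN l hsort htime x u Cu Du hCu hDu hCmem hDmem η
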